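/- arXiv:1901.07371 — 6 statements merged into one kernel-verified Lean document; each statement's English description precedes it below -/
import Mathlib

section
/- SM(4,ℂ) is a multiplicative semigroup: if A and B are 4×4 complex matrices whose entries satisfy the SM(4,ℂ) conditions (a_{13} = a_{12}, a_{43} = a_{42}, a_{23} = a_{22} − 1, a_{32} = a_{33} − 1), then the matrix product A·B also satisfies these conditions. -/
open Matrix

noncomputable section

/-- `A ∈ SM(4,ℂ)`: a 4×4 complex matrix whose entries (1-based `a_{ij}`) satisfy
`a₁₃ = a₁₂`, `a₄₃ = a₄₂`, `a₂₃ = a₂₂ - 1`, `a₃₂ = a₃₃ - 1`.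
(Here indices are 0-based, so e.g. `a₁₃ = A 0 2`.) -/
def SM4 (A : Matrix (Fin 4) (Fin 4) ℂ) : Prop :=
  A 0 2 = A 0 1 ∧ A 3 2 = A 3 1 ∧ A 1 2 = A 1 1 - 1 ∧ A 2 1 = A 2 2 - 1

/-- `SM(4,ℂ)` is closed under matrix multiplication, i.e. it is a multiplicative
semigroup. -/
theorem SM4_mul_closed (A B : Matrix (Fin 4) (Fin 4) ℂ) (hA : SM4 A) (hB : SM4 B) :
    SM4 (A * B) := by
  obtain ⟨a1, a2, a3, a4⟩ := hA
  obtain ⟨b1, b2, b3, b4⟩ := hB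
  refine ⟨?_, ?_, ?_, ?_⟩ <;>
    simp [Matrix.mul_apply, Fin.sum_univ_four, a1, a2, a3, a4, b1, b2, b3, b4] <;> ring
end
end

section
/- Let a₄₄ ∈ ℂ with a₄₄ ≠ 1 and let A be the 4×4 complex matrix with rows (1,0,0,0), (1,1,0,0), (1,0,1,0), (1,1,1,a₄₄). Then A is not expressible as a Kronecker product: there do not exist 2×2 complex matrices g and h with A = g ⊗ h. -/
open Matrix

noncomputable section

/-- Split an index of `Fin 4` into a pair of `Fin 2` indices via `p = 2*i + j`. -/
def splitIdx (p : Fin 4) : Fin 2 × Fin 2 :=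
  (⟨p.val / 2, by have := p.isLt; omega⟩, ⟨p.val % 2, by have := p.isLt; omega⟩)

/-- Kronecker product of two `2 × 2` complex matrices, as a `4 × 4` matrix:
`(g ⊗ h)_{2i+j, 2k+l} = g_{ik} * h_{jl}`. -/
def kron (g h : Matrix (Fin 2) (Fin 2) ℂ) : Matrix (Fin 4) (Fin 4) ℂ :=
  Matrix.of fun p q => g (splitIdx p).1 (splitIdx q).1 * h (splitIdx p).2 (splitIdx q).2

/-- For `a₄₄ ≠ 1`, the matrix with rows `(1,0,0,0), (1,1,0,0), (1,0,1,0), (1,1,1,a₄₄)`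
is irreducible: it is not a Kronecker product of two 2×2 matrices. -/
theorem irreducible_example_not_kron (a : ℂ) (ha : a ≠ 1) :
    ¬ ∃ g h : Matrix (Fin 2) (Fin 2) ℂ,
      (!![1,0,0,0; 1,1,0,0; 1,0,1,0; 1,1,1,a] : Matrix (Fin 4) (Fin 4) ℂ) = kron g h := by
  rintro ⟨g, h, heq⟩
  have e00 := congrFun (congrFun heq 0) 0
  have e11 := congrFun (congrFun heq 1) 1
  have e22 := congrFun (congrFun heq 2) 2
  have e33 := congrFun (congrFun heq 3) 3
  simp [kron, splitIdx, Matrix.of_apply] at e00 e11 e22 e33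
  have f00 : g 0 0 * h 0 0 = 1 := e00.symm
  have f11 : g 0 0 * h 1 1 = 1 := e11.symm
  have f22 : g 1 1 * h 0 0 = 1 := e22.symm
  have f33 : g 1 1 * h 1 1 = a := e33.symm
  apply ha
  calc a = g 1 1 * h 1 1 := f33.symm
    _ = (g 0 0 * h 0 0) * (g 1 1 * h 1 1) := by rw [f00]; ring
    _ = (g 0 0 * h 1 1) * (g 1 1 * h 0 0) := by ring
    _ = 1 := by rw [f11, f22]; ring
end
end

section
/- Let σ₃ = diag(1, −1), let θ, φ, r₁, r₂ be real numbers with r₁·r₂ = 1, let R(θ,φ) = [[r₁ cos θ, r₂ sin φ], [−r₁ sin θ, r₂ cos φ]], and let ψ = (0, 1, −1, 0)ᵀ ∈ ℂ⁴. Then (R(θ,φ)σ₃ ⊗ R(θ,φ)σ₃)·ψ = −cos(θ − φ)·ψ. -/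
open Matrix

noncomputable section

/-- The (unnormalized) singlet state `ψ = (0, 1, -1, 0)ᵀ ∈ ℂ⁴`. -/
def psi : Fin 4 → ℂ := ![0, 1, -1, 0]

/-- The Pauli matrix `σ₃ = diag(1, -1)`. -/
def sigma3 : Matrix (Fin 2) (Fin 2) ℂ := !![1, 0; 0, -1]

/-- The generalized rotation
`R(θ,φ) = [[r₁ cos θ, r₂ sin φ], [−r₁ sin θ, r₂ cos φ]]`. -/
def Rmat (θ φ r₁ r₂ : ℝ) : Matrix (Fin 2) (Fin 2) ℂ :=
  !![(r₁ * Real.cos θ : ℝ), (r₂ * Real.sin φ : ℝ);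
     (-(r₁ * Real.sin θ) : ℝ), (r₂ * Real.cos φ : ℝ)]

/-- `(R(θ,φ)σ₃ ⊗ R(θ,φ)σ₃) ψ = -cos(θ - φ) • ψ`. -/
theorem Rsigma_kron_singlet (θ φ r₁ r₂ : ℝ) (hr : r₁ * r₂ = 1) :
    (kron (Rmat θ φ r₁ r₂ * sigma3) (Rmat θ φ r₁ r₂ * sigma3)).mulVec psi
      = (-(Real.cos (θ - φ)) : ℂ) • psi := by
  funext p
  have hrc : (r₁ : ℂ) * r₂ = 1 := by exact_mod_cast hr
  fin_cases p <;>
    simp [Matrix.mulVec, dotProduct, kron, splitIdx, psi, sigma3, Rmat,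
      Matrix.mul_apply, Fin.sum_univ_succ, Real.cos_sub, show ((3 : Fin 4).val) = 3 from rfl] <;>
    ring_nf
  · linear_combination (-(Complex.cos θ * Complex.cos φ) - Complex.sin φ * Complex.sin θ) * hrc
  · linear_combination (Complex.sin θ * Complex.sin φ + Complex.cos φ * Complex.cos θ) * hrc
end
end

section
/- (Bell's inequality) Let (Λ, μ) be a probability space and let A₁, A₂, A₃ : Λ → ℝ be measurable functions taking only the values +1 and −1 (the hidden-variable spin outcomes of particle 1 in three directions, the second particle's outcome being the negative). Define E(i, j) := −∫_Λ Aᵢ(λ)·Aⱼ(λ) dμ(λ). Then |E(1,2) − E(1,3)| ≤ 1 + E(2,3). -/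
open MeasureTheory

noncomputable section

/-- (Bell's inequality) For hidden-variable spin outcome functions
`A₁, A₂, A₃ : Λ → ℝ` taking only the values `±1` on a probability space `(Λ, μ)`,
the correlations `E(i,j) = -∫ Aᵢ Aⱼ dμ` satisfy
`|E(1,2) - E(1,3)| ≤ 1 + E(2,3)`. -/
theorem bell_inequality {Λ : Type*} [MeasurableSpace Λ] (μ : Measure Λ)
    [IsProbabilityMeasure μ] (A : Fin 3 → Λ → ℝ)
    (hmeas : ∀ i, Measurable (A i))
    (hval : ∀ i x, A i x = 1 ∨ A i x = -1) :
    |(-∫ x, A 0 x * A 1 x ∂μ) - (-∫ x, A 0 x * A 2 x ∂μ)|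
      ≤ 1 + (-∫ x, A 1 x * A 2 x ∂μ) := by
  have hint : ∀ i j : Fin 3, Integrable (fun x => A i x * A j x) μ := by
    intro i j
    refine (integrable_const (1 : ℝ)).mono'
      ((hmeas i).mul (hmeas j)).aestronglyMeasurable
      (Filter.Eventually.of_forall fun x => ?_)
    rcases hval i x with h1 | h1 <;> rcases hval j x with h2 | h2 <;>
      simp [h1, h2]
  have key : ∀ x, |A 0 x * A 2 x - A 0 x * A 1 x| = 1 - A 1 x * A 2 x := by
    intro x
    rcases hval 0 x with h0 | h0 <;> rcases hval 1 x with h1 | h1 <;>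
      rcases hval 2 x with h2 | h2 <;> simp [h0, h1, h2] <;> norm_num
  have h1 : |(-∫ x, A 0 x * A 1 x ∂μ) - (-∫ x, A 0 x * A 2 x ∂μ)|
      = |∫ x, (A 0 x * A 2 x - A 0 x * A 1 x) ∂μ| := by
    rw [integral_sub (hint 0 2) (hint 0 1)]
    ring_nf
  have h2 : |∫ x, (A 0 x * A 2 x - A 0 x * A 1 x) ∂μ|
      ≤ ∫ x, |A 0 x * A 2 x - A 0 x * A 1 x| ∂μ :=
    by simpa [Real.norm_eq_abs] using
      norm_integral_le_integral_norm (fun x => A 0 x * A 2 x - A 0 x * A 1 x) (μ := μ)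
  have h3 : ∫ x, |A 0 x * A 2 x - A 0 x * A 1 x| ∂μ
      = 1 - ∫ x, A 1 x * A 2 x ∂μ := by
    have : ∫ x, |A 0 x * A 2 x - A 0 x * A 1 x| ∂μ
        = ∫ x, (1 - A 1 x * A 2 x) ∂μ := by
      exact integral_congr_ae (Filter.Eventually.of_forall key)
    rw [this, integral_sub (integrable_const 1) (hint 1 2)]
    simp
  rw [h1]
  linarith [h2, h3.ge, h3.le]
end
end

section
/- No local hidden-variable model reproduces the quantum singlet correlations at angles 0, π/3, 2π/3: there is no probability space (Λ, μ) with measurable functions A₁, A₂, A₃ : Λ → ℝ taking only the values +1 and −1 such that ∫ A₁A₂ dμ = 1/2, ∫ A₂A₃ dμ = 1/2, and ∫ A₁A₃ dμ = −1/2 (the values nᵢ·nⱼ for coplanar unit directions at azimuthal angles 0, π/3, 2π/3). -/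
open MeasureTheory

noncomputable section

/-- No local hidden-variable model reproduces the quantum singlet correlations at
angles `0, π/3, 2π/3`: there is no probability space `(Λ, μ)` with `±1`-valued
measurable functions `A₁, A₂, A₃` such that `∫ A₁A₂ = 1/2`, `∫ A₂A₃ = 1/2` and
`∫ A₁A₃ = -1/2`. -/
theorem no_hidden_variables {Λ : Type*} [MeasurableSpace Λ] (μ : Measure Λ)
    [IsProbabilityMeasure μ] (A : Fin 3 → Λ → ℝ)
    (hmeas : ∀ i, Measurable (A i))
    (hval : ∀ i x, A i x = 1 ∨ A i x = -1) :
    ¬ ((∫ x, A 0 x * A 1 x ∂μ) = 1 / 2 ∧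
       (∫ x, A 1 x * A 2 x ∂μ) = 1 / 2 ∧
       (∫ x, A 0 x * A 2 x ∂μ) = -(1 / 2)) := by
  rintro ⟨h01, h12, h02⟩
  have hint : ∀ i j, Integrable (fun x => A i x * A j x) μ := by
    intro i j
    apply Integrable.mono' (integrable_const 1)
      ((hmeas i).mul (hmeas j)).aestronglyMeasurable
    filter_upwards with x
    rcases hval i x with h | h <;> rcases hval j x with h' | h' <;>
      simp [h, h']
  have key : (∫ x, (A 0 x * A 1 x + A 1 x * A 2 x - A 0 x * A 2 x) ∂μ) ≤ 1 := by
    calc (∫ x, (A 0 x * A 1 x + A 1 x * A 2 x - A 0 x * A 2 x) ∂μ)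
        ≤ ∫ _x, (1 : ℝ) ∂μ := by
          apply integral_mono (by exact (((hint 0 1).add (hint 1 2)).sub (hint 0 2)))
            (integrable_const 1)
          intro x
          rcases hval 0 x with h0 | h0 <;> rcases hval 1 x with h1 | h1 <;>
            rcases hval 2 x with h2 | h2 <;> simp [h0, h1, h2] <;> norm_num
      _ = 1 := by simp
  have h012 : Integrable (fun x => A 0 x * A 1 x + A 1 x * A 2 x) μ :=
    (hint 0 1).add (hint 1 2)
  rw [integral_sub h012 (hint 0 2),
    integral_add (hint 0 1) (hint 1 2), h01, h12, h02] at key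
  norm_num at key
end
end

section
/- (Wigner's inequality) Let μ be any probability measure on the finite set {−1, +1}³ of hidden-variable spin assignments (s₁, s₂, s₃) in three directions. Then μ{s : s₁ = +1 and s₃ = −1} ≤ μ{s : s₁ = +1 and s₂ = −1} + μ{s : s₂ = +1 and s₃ = −1}. -/
open MeasureTheory

noncomputable section

/-- (Wigner's inequality) For any probability measure `μ` on the 8-element set
`{-1, +1}³` of hidden-variable spin assignments `s = (s₁, s₂, s₃)`,
`μ{s₁ = +1, s₃ = -1} ≤ μ{s₁ = +1, s₂ = -1} + μ{s₂ = +1, s₃ = -1}`. -/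
theorem wigner_inequality
    (μ : Measure (Fin 3 → ({-1, 1} : Set ℤ))) [IsProbabilityMeasure μ] :
    μ {s | (s 0 : ℤ) = 1 ∧ (s 2 : ℤ) = -1}
      ≤ μ {s | (s 0 : ℤ) = 1 ∧ (s 1 : ℤ) = -1}
        + μ {s | (s 1 : ℤ) = 1 ∧ (s 2 : ℤ) = -1} := by
  refine le_trans (measure_mono ?_) (measure_union_le _ _)
  rintro s ⟨h0, h2⟩
  rcases (s 1).2 with h | h
  · exact Or.inl ⟨h0, h⟩
  · exact Or.inr ⟨h, h2⟩
end
end
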